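/- arXiv:math-ph/0606064 — 4 statements merged into one kernel-verified Lean document; each statement's English description precedes it below -/
import Mathlib

section
/- Let (α_n), (β_n), (r_n) be sequences of smooth real functions of t satisfying: β_n = n/2 + r_n/2 + γ/4 with r_0 = −γ/2; the difference equations (r_{n+1}+r_n)/2 = (t−α_n)α_n and (t−α_n)(β_{n+1}−β_n−1/2) = β_{n+1}α_{n+1} − β_n α_{n-1}; and the Toda equations β_n'/β_n = 2(α_{n-1}−α_n) and α_n' = 2(β_n − β_{n+1}) + 1. Then for each n, α_n satisfies the Painlevé IV type ODE: α_n'' = (α_n')²/(2α_n) + 6α_n³ − 8t α_n² + 2(t² − γ − 2n − 1)α_n − γ²/(2α_n), at every t where α_n(t) ≠ 0 and n + r_n + γ/2 ≠ 0. -/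
/-- The diagonal recurrence coefficients α_n(t) satisfy a particular Painlevé IV equation,
derived from the string equations (S1), (S2) and the Toda evolution equations. -/
theorem alpha_satisfies_painleve_IV
    (γ : ℝ) (α β r : ℕ → ℝ → ℝ)
    (hαs : ∀ n, ContDiff ℝ (⊤ : ℕ∞) (α n))
    (hβs : ∀ n, ContDiff ℝ (⊤ : ℕ∞) (β n))
    (hrs : ∀ n, ContDiff ℝ (⊤ : ℕ∞) (r n))
    (hβdef : ∀ n t, β n t = n / 2 + r n t / 2 + γ / 4)
    (hr0 : ∀ t, r 0 t = -γ / 2)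
    (heq1 : ∀ n t, (r (n + 1) t + r n t) / 2 = (t - α n t) * α n t)
    (heq2 : ∀ n t,
      (t - α (n + 1) t) * (β (n + 2) t - β (n + 1) t - 1 / 2)
        = β (n + 2) t * α (n + 2) t - β (n + 1) t * α n t)
    (htoda1 : ∀ n t, deriv (β (n + 1)) t / β (n + 1) t = 2 * (α n t - α (n + 1) t))
    (htoda2 : ∀ n t, deriv (α n) t = 2 * (β n t - β (n + 1) t) + 1) :
    ∀ (n : ℕ) (t : ℝ), α n t ≠ 0 → (n : ℝ) + r n t + γ / 2 ≠ 0 →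
      deriv (deriv (α n)) t
        = (deriv (α n) t) ^ 2 / (2 * α n t) + 6 * (α n t) ^ 3 - 8 * t * (α n t) ^ 2
            + 2 * (t ^ 2 - γ - 2 * n - 1) * α n t - γ ^ 2 / (2 * α n t) := by
  have hαd : ∀ n, Differentiable ℝ (α n) := fun n => (hαs n).differentiable (by simp)
  have hrd : ∀ n, Differentiable ℝ (r n) := fun n => (hrs n).differentiable (by simp)
  -- F1 : α_n' = r_n - r_{n+1}
  have hF1 : ∀ n t, deriv (α n) t = r n t - r (n + 1) t := by
    intro n t
    rw [htoda2 n t, hβdef n t, hβdef (n + 1) t]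
    push_cast
    ring
  -- F2 : r_{n+1} = 2(t-α_n)α_n - r_n  (as functions)
  have hF2 : ∀ n, r (n + 1) = fun x => 2 * ((x - α n x) * α n x) - r n x := by
    intro n
    funext x
    have h := heq1 n x
    linarith
  -- F3 : derivative of F2
  have hF3 : ∀ n t, deriv (r (n + 1)) t
      = 2 * α n t + 2 * (t - 2 * α n t) * deriv (α n) t - deriv (r n) t := by
    intro n t
    have h1 : HasDerivAt (α n) (deriv (α n) t) t := (hαd n t).hasDerivAt
    have h2 : HasDerivAt (r n) (deriv (r n) t) t := (hrd n t).hasDerivAt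
    have H : HasDerivAt (fun x : ℝ => 2 * ((x - α n x) * α n x) - r n x)
        (2 * ((1 - deriv (α n) t) * α n t + (t - α n t) * deriv (α n) t) - deriv (r n) t) t := by
      exact (HasDerivAt.const_mul 2 (((hasDerivAt_id t).sub h1).mul h1)).sub h2
    rw [hF2 n]
    rw [H.deriv]
    ring
  -- derivative of β_{n+1} in terms of derivative of r_{n+1}
  have hdβ : ∀ n t, deriv (β (n + 1)) t = deriv (r (n + 1)) t / 2 := by
    intro n t
    have hfun : β (n + 1) = fun x => ((n + 1 : ℕ) : ℝ) / 2 + r (n + 1) x / 2 + γ / 4 :=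
      funext fun x => hβdef (n + 1) x
    rw [hfun]
    have h : HasDerivAt (r (n + 1)) (deriv (r (n + 1)) t) t := (hrd (n + 1) t).hasDerivAt
    exact (((h.div_const 2).const_add (((n + 1 : ℕ) : ℝ) / 2)).add_const (γ / 4)).deriv
  -- T : the multiplied Toda equation holds at every point
  have hT : ∀ n t, deriv (r (n + 1)) t
      = 2 * (α n t - α (n + 1) t) * ((n : ℝ) + 1 + γ / 2 + r (n + 1) t) := by
    intro n
    set B : ℝ → ℝ := fun x => (n : ℝ) + 1 + γ / 2 + r (n + 1) x with hBdef
    have hBcont : Continuous B := continuous_const.add (hrs (n + 1)).continuous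
    have hfcont : Continuous (fun x => deriv (r (n + 1)) x
        - 2 * (α n x - α (n + 1) x) * B x) :=
      ((hrs (n + 1)).continuous_deriv (by simp)).sub
        ((continuous_const.mul ((hαs n).continuous.sub (hαs (n + 1)).continuous)).mul hBcont)
    set U : Set ℝ := {x | B x ≠ 0} with hUdef
    have hU : ∀ x ∈ U, deriv (r (n + 1)) x = 2 * (α n x - α (n + 1) x) * B x := by
      intro x hx
      have hβval : β (n + 1) x = B x / 2 := by
        rw [hβdef (n + 1) x, hBdef]
        push_cast
        ring
      have hβne : β (n + 1) x ≠ 0 := by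
        rw [hβval]
        exact div_ne_zero hx two_ne_zero
      have htd := htoda1 n x
      rw [div_eq_iff hβne] at htd
      have e1 := hdβ n x
      linear_combination (-2 : ℝ) * e1 + 2 * htd + 4 * (α n x - α (n + 1) x) * hβval
    intro t
    by_cases hc : t ∈ closure U
    · have hcl : closure U ⊆ {x | deriv (r (n + 1)) x
          - 2 * (α n x - α (n + 1) x) * B x = 0} := by
        apply closure_minimal
        · intro x hx
          have := hU x hx
          simp only [Set.mem_setOf_eq]
          linarith
        · exact isClosed_eq hfcont continuous_const
      have := hcl hc
      simp only [Set.mem_setOf_eq, hBdef] at this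
      linarith
    · have hopen : IsOpen (closure U)ᶜ := isClosed_closure.isOpen_compl
      have hnhds : ∀ᶠ x in nhds t, B x = 0 := by
        filter_upwards [hopen.mem_nhds hc] with x hx
        by_contra h
        exact hx (subset_closure h)
      have hrev : r (n + 1) =ᶠ[nhds t] fun _ => -((n : ℝ) + 1 + γ / 2) := by
        filter_upwards [hnhds] with x hx
        have : (n : ℝ) + 1 + γ / 2 + r (n + 1) x = 0 := hx
        linarith
      have hd0 : deriv (r (n + 1)) t = 0 := by
        rw [hrev.deriv_eq]
        simp
      have hB0 : B t = 0 := hnhds.self_of_nhds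
      rw [hd0]
      have : (n : ℝ) + 1 + γ / 2 + r (n + 1) t = 0 := hB0
      rw [this]
      ring
  -- Main invariant J_n, by induction on n
  have hJ : ∀ n t, 2 * (α n t) ^ 2 * ((n : ℝ) + γ / 2 + r n t)
      + α n t * deriv (r n) t - (r n t) ^ 2 = -γ ^ 2 / 4 := by
    intro n
    induction n with
    | zero =>
      intro t
      have h0 : r 0 = fun _ => -γ / 2 := funext hr0
      rw [h0]
      simp only [deriv_const']
      push_cast
      ring
    | succ n ih =>
      intro t
      -- first the "primed" form J'_{n+1}
      have hJ' : 2 * (α n t) ^ 2 * ((n : ℝ) + 1 + γ / 2 + r (n + 1) t)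
          - α n t * deriv (r (n + 1)) t - (r (n + 1) t) ^ 2 = -γ ^ 2 / 4 := by
        have hS : r (n + 1) t = 2 * ((t - α n t) * α n t) - r n t := by
          rw [hF2 n]
        have hSp := hF3 n t
        have hup := hF1 n t
        have ihn := ih t
        linear_combination ihn - (r (n + 1) t - r n t) * hS - α n t * hSp
          - 2 * α n t * (t - 2 * α n t) * hup
      have hTt := hT n t
      push_cast
      linear_combination hJ' + (α (n + 1) t + α n t) * hTt
  -- Final derivation of Painlevé IV from J_n
  intro n t hu _hβ
  have hu2 : (2 : ℝ) * α n t ≠ 0 := mul_ne_zero two_ne_zero hu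
  have ihn := hJ n t
  have hs : r n t = (t - α n t) * α n t + deriv (α n) t / 2 := by
    have h1 := heq1 n t
    have h2 := hF1 n t
    linarith
  have hrfun : r n = fun x => (x - α n x) * α n x + deriv (α n) x / 2 := by
    funext x
    have h1 := heq1 n x
    have h2 := hF1 n x
    linarith
  have hsp : deriv (r n) t = α n t + (t - 2 * α n t) * deriv (α n) t
      + deriv (deriv (α n)) t / 2 := by
    have h1 : HasDerivAt (α n) (deriv (α n) t) t := (hαd n t).hasDerivAt
    have hdd : Differentiable ℝ (deriv (α n)) :=
      ((contDiff_infty_iff_deriv.mp ((hαs n).of_le (by simp))).2).differentiable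
        (by simp)
    have h2 : HasDerivAt (deriv (α n)) (deriv (deriv (α n)) t) t := (hdd t).hasDerivAt
    have H : HasDerivAt (fun x : ℝ => (x - α n x) * α n x + deriv (α n) x / 2)
        ((1 - deriv (α n) t) * α n t + (t - α n t) * deriv (α n) t
          + deriv (deriv (α n)) t / 2) t :=
      (((hasDerivAt_id t).sub h1).mul h1).add (h2.div_const 2)
    rw [hrfun, H.deriv]
    ring
  have key : 2 * α n t * deriv (deriv (α n)) t
      = deriv (α n) t ^ 2 + 12 * (α n t) ^ 4 - 16 * t * (α n t) ^ 3
        + 4 * (t ^ 2 - γ - 2 * (n : ℝ) - 1) * (α n t) ^ 2 - γ ^ 2 := by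
    linear_combination 4 * ihn
      + (2 * r n t + 2 * t * α n t - 6 * (α n t) ^ 2 + deriv (α n) t) * 2 * hs
      - 4 * α n t * hsp
  have : deriv (deriv (α n)) t
      = (deriv (α n) t ^ 2 + 12 * (α n t) ^ 4 - 16 * t * (α n t) ^ 3
        + 4 * (t ^ 2 - γ - 2 * (n : ℝ) - 1) * (α n t) ^ 2 - γ ^ 2) / (2 * α n t) := by
    rw [eq_div_iff hu2]
    linear_combination key
  rw [this]
  field_simp
  ring
end

section
/- Suppose (r_n) and (α_n) are real sequences (with α_{-1} an arbitrary real number) and let β_n = n/2 + r_n/2 + γ/4. Assume that (t−α_n)(β_{n+1}−β_n−1/2) = β_{n+1}α_{n+1} − β_n α_{n-1} and (r_{n+1}+r_n)/2 = (t−α_n)α_n for all n ≥ 0, and that r_0 = −γ/2. Then for all n ≥ 0: r_n² = 2(n + r_n + γ/2) α_n α_{n-1} + γ²/4. -/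
/-- First integral of the string equations: r_n² = 2(n + r_n + γ/2) α_n α_{n−1} + γ²/4. -/
theorem string_first_integral
    (t γ : ℝ) (α : ℤ → ℝ) (r β : ℕ → ℝ)
    (hβdef : ∀ n : ℕ, β n = n / 2 + r n / 2 + γ / 4)
    (hr0 : r 0 = -γ / 2)
    (heq1 : ∀ n : ℕ, (r (n + 1) + r n) / 2 = (t - α n) * α n)
    (heq2 : ∀ n : ℕ,
      (t - α n) * (β (n + 1) - β n - 1 / 2)
        = β (n + 1) * α (n + 1) - β n * α ((n : ℤ) - 1)) :
    ∀ n : ℕ, (r n) ^ 2 = 2 * ((n : ℝ) + r n + γ / 2) * α n * α ((n : ℤ) - 1) + γ ^ 2 / 4 := by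
  intro n
  induction n with
  | zero =>
    simp only [Nat.cast_zero]
    rw [hr0]; ring
  | succ n ih =>
    have h1 := heq1 n
    have h2 := heq2 n
    rw [hβdef (n + 1), hβdef n] at h2
    have hc : ((n + 1 : ℕ) : ℤ) - 1 = (n : ℤ) := by push_cast; ring
    rw [hc]
    have hc2 : ((n + 1 : ℕ) : ℝ) = (n : ℝ) + 1 := by push_cast; ring
    rw [hc2] at h2 ⊢
    rw [show ((n + 1 : ℕ) : ℤ) = (n : ℤ) + 1 from by push_cast; ring]
    linear_combination ih + 2 * (r (n + 1) - r n) * h1 + 4 * α n * h2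
end

section
/- Define P_s(x) = ∑_{i+2j=s, i,j≥0} x^i / (6^j i! j!) for s ≥ 0 and P_s = 0 for s < 0, and the generalized Hermite polynomial H_{m,n}(x) = det( P_{n−i+j}(x) )_{i,j=1}^{m}. Then the leading coefficient of H_{m,n} (as a polynomial in x of degree mn) equals G(m+1)G(n+1)/G(m+n+1), where G is the Barnes G-function determined by G(1) = 1 and G(z+1) = Γ(z)G(z), i.e. the leading coefficient is ∏_{i=1}^{m} (i−1)! · ∏_{j=1}^{n} (j−1)! / ∏_{k=1}^{m+n} (k−1)! restricted appropriately — equivalently ∏_{i=0}^{m-1} i! / (n+i)!. -/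
open Polynomial

/-- P_s(x) = ∑_{i+2j=s} x^i / (6^j i! j!) for s ≥ 0, and P_s = 0 for s < 0. -/
noncomputable def genHermiteEntry (s : ℤ) : Polynomial ℝ :=
  if 0 ≤ s then
    ∑ j ∈ Finset.range (s.toNat / 2 + 1),
      Polynomial.C (1 / (6 ^ j * (Nat.factorial (s.toNat - 2 * j)) * (Nat.factorial j) : ℝ))
        * Polynomial.X ^ (s.toNat - 2 * j)
  else 0

/-- The generalized Hermite polynomial H_{m,n}(x) = det(P_{n−i+j})_{i,j=1,…,m}. -/
noncomputable def genHermite (m n : ℕ) : Polynomial ℝ :=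
  Matrix.det (Matrix.of fun i j : Fin m => genHermiteEntry ((n : ℤ) - (i : ℤ) + (j : ℤ)))

/-! Every entry `P_{n-i+j}` of `H_{m,n}` has degree at most `n+j-i` (and vanishes when `n+j < i`),
with top coefficient `1/(n+j-i)!`. Hence every term of the Leibniz expansion has degree at most
`∑ (n+j) - ∑ i = mn`, and the `x^{mn}`-coefficient of `H_{m,n}` is the determinant of the top
coefficients `1/(n+j-i)! = (n+j).descFactorial i / (n+j)!`. Pulling the factors `1/(n+j)!` out of
the columns leaves a matrix of falling factorials, whose determinant is the Vandermonde determinant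
at the nodes `n, …, n+m-1`, namely `∏_{i<m} i!`. -/

open scoped Nat

namespace Polynomial

variable {R ι : Type*} [CommSemiring R]

theorem coeff_prod_sum_of_natDegree_le (s : Finset ι) (f : ι → R[X]) (d : ι → ℕ)
    (h : ∀ i ∈ s, (f i).natDegree ≤ d i) :
    (∏ i ∈ s, f i).coeff (∑ i ∈ s, d i) = ∏ i ∈ s, (f i).coeff (d i) := by
  induction s using Finset.cons_induction with
  | empty => simp
  | cons a s ha ih =>
    rw [Finset.forall_mem_cons] at h
    rw [Finset.prod_cons, Finset.sum_cons, coeff_mul_add_eq_of_natDegree_le h.1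
      ((natDegree_prod_le s f).trans (Finset.sum_le_sum h.2)), ih h.2, Finset.prod_cons]

section ShiftedDegrees

variable [Fintype ι] (p : ι → R[X]) (a b : ι → ℕ)
  (hzero : ∀ i, b i < a i → p i = 0) (hdeg : ∀ i, (p i).natDegree ≤ b i - a i)
include hzero hdeg

theorem natDegree_prod_le_sum_tsub : (∏ i, p i).natDegree ≤ ∑ i, b i - ∑ i, a i := by
  by_cases hab : ∀ i, a i ≤ b i
  · rw [← Finset.sum_tsub_distrib _ fun i _ => hab i]
    exact (natDegree_prod_le _ _).trans (Finset.sum_le_sum fun i _ => hdeg i)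
  · obtain ⟨i, hi⟩ := not_forall.1 hab
    rw [Finset.prod_eq_zero (Finset.mem_univ i) (hzero i (not_le.1 hi)), natDegree_zero]
    exact Nat.zero_le _

theorem coeff_prod_sum_tsub :
    (∏ i, p i).coeff (∑ i, b i - ∑ i, a i) = ∏ i, (p i).coeff (b i - a i) := by
  by_cases hab : ∀ i, a i ≤ b i
  · rw [← Finset.sum_tsub_distrib _ fun i _ => hab i]
    exact coeff_prod_sum_of_natDegree_le _ _ _ fun i _ => hdeg i
  · obtain ⟨i, hi⟩ := not_forall.1 hab
    have hpi := hzero i (not_le.1 hi)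
    rw [Finset.prod_eq_zero (Finset.mem_univ i) hpi, coeff_zero,
      Finset.prod_eq_zero (Finset.mem_univ i) (by rw [hpi, coeff_zero])]

end ShiftedDegrees

end Polynomial

namespace Matrix

section ShiftedDegrees

variable {R n : Type*} [CommRing R] [Fintype n] [DecidableEq n]
  -- `c j - r i` truncates, so `hzero` is what makes `hdeg` an honest bound when `c j < r i`
  (M : Matrix n n R[X]) (r c : n → ℕ)
  (hzero : ∀ i j, c j < r i → M i j = 0) (hdeg : ∀ i j, (M i j).natDegree ≤ c j - r i)
include hzero hdeg

theorem natDegree_det_le_sum_tsub : M.det.natDegree ≤ ∑ j, c j - ∑ i, r i := by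
  rw [natDegree_le_iff_coeff_eq_zero]
  intro k hk
  rw [det_apply, finsetSum_coeff]
  refine Finset.sum_eq_zero fun σ _ => ?_
  have hσ := natDegree_prod_le_sum_tsub (fun i => M (σ i) i) (fun i => r (σ i)) c
    (fun i => hzero _ _) (fun i => hdeg _ _)
  rw [Equiv.sum_comp σ r] at hσ
  rw [coeff_smul, coeff_eq_zero_of_natDegree_lt (hσ.trans_lt hk), smul_zero]

theorem coeff_det_sum_tsub :
    M.det.coeff (∑ j, c j - ∑ i, r i) = (of fun i j => (M i j).coeff (c j - r i)).det := by
  rw [det_apply, det_apply, finsetSum_coeff]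
  refine Finset.sum_congr rfl fun σ _ => ?_
  rw [coeff_smul, ← Equiv.sum_comp σ r, coeff_prod_sum_tsub (fun i => M (σ i) i)
    (fun i => r (σ i)) c (fun i => hzero _ _) (fun i => hdeg _ _)]
  rfl

end ShiftedDegrees

variable {R : Type*} [CommRing R]

theorem det_descFactorial [IsDomain R] {m : ℕ} (x : Fin m → ℕ) :
    (of fun i j : Fin m => (((x j).descFactorial i : ℕ) : R)).det
      = (vandermonde fun i => (x i : R)).det := by
  rw [det_eval_matrixOfPolynomials_eq_det_vandermonde _ (fun j => descPochhammer R j)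
    (fun i => descPochhammer_natDegree R i) (fun i => monic_descPochhammer R i), ← det_transpose]
  congr 1
  ext i j
  simp [descPochhammer_eval_eq_descFactorial]

theorem det_vandermonde_natCast_add (m n : ℕ) :
    (vandermonde fun i : Fin m => ((n + i : ℕ) : R)).det = ∏ i ∈ Finset.range m, (i ! : R) := by
  cases m with
  | zero => simp
  | succ m =>
    simp_rw [Nat.cast_add, add_comm (n : R)]
    rw [det_vandermonde_add, det_vandermonde_id_eq_superFactorial, ← Nat.prod_range_succ_factorial]
    push_cast
    rfl

theorem det_descFactorial_div_factorial {K : Type*} [Field K] (m n : ℕ) :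
    (of fun i j : Fin m => ((n + j : ℕ).descFactorial i : K) / (n + j : ℕ)!).det
      = ∏ i ∈ Finset.range m, (i ! : K) / (n + i)! := by
  simp_rw [div_eq_inv_mul]
  refine (det_mul_row (fun j : Fin m => ((n + j : ℕ)! : K)⁻¹)
    (of fun i j : Fin m => (((n + j : ℕ).descFactorial i : ℕ) : K))).trans ?_
  rw [det_descFactorial (fun j : Fin m => n + j), det_vandermonde_natCast_add,
    Fin.prod_univ_eq_prod_range (fun j => ((n + j : ℕ)! : K)⁻¹), ← Finset.prod_mul_distrib]

end Matrix

theorem genHermiteEntry_eq_zero {s : ℤ} (hs : s < 0) : genHermiteEntry s = 0 :=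
  if_neg (not_le.2 hs)

theorem genHermiteEntry_natDegree_le (s : ℤ) : (genHermiteEntry s).natDegree ≤ s.toNat := by
  unfold genHermiteEntry
  split_ifs
  · exact natDegree_sum_le_of_forall_le _ _ fun j _ =>
      (natDegree_C_mul_X_pow_le _ _).trans (Nat.sub_le _ _)
  · simp

theorem genHermiteEntry_natCast_coeff (s : ℕ) :
    (genHermiteEntry s).coeff s = ((s ! : ℕ) : ℝ)⁻¹ := by
  rw [genHermiteEntry, if_pos (Nat.cast_nonneg s), Int.toNat_natCast, finsetSum_coeff,
    Finset.sum_eq_single 0]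
  · simp
  · intro j hj hj0
    have := Finset.mem_range.1 hj
    rw [coeff_C_mul, coeff_X_pow, if_neg (by omega), mul_zero]
  · simp

theorem genHermiteEntry_coeff_sub (a i : ℕ) :
    (genHermiteEntry ((a : ℤ) - i)).coeff (a - i) = (a.descFactorial i : ℝ) / a ! := by
  rcases le_or_gt i a with h | h
  · rw [← Nat.cast_sub h, genHermiteEntry_natCast_coeff, ← Nat.factorial_mul_descFactorial h]
    have := Nat.factorial_pos (a - i)
    have := Nat.descFactorial_pos.2 h
    push_cast
    field_simp
  · rw [genHermiteEntry_eq_zero (by omega), Nat.descFactorial_eq_zero_iff_lt.2 h]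
    simp

/-- H_{m,n} has degree mn and its leading coefficient equals
G(m+1)G(n+1)/G(m+n+1) = ∏_{i=0}^{m-1} i!/(n+i)!. -/
theorem genHermite_leadingCoeff (m n : ℕ) :
    (genHermite m n).natDegree = m * n ∧
      (genHermite m n).coeff (m * n)
        = ∏ i ∈ Finset.range m, (Nat.factorial i : ℝ) / (Nat.factorial (n + i) : ℝ) := by
  set M : Matrix (Fin m) (Fin m) ℝ[X] := .of fun i j => genHermiteEntry ((n : ℤ) - i + j)
  have hzero (i j : Fin m) (h : n + (j : ℕ) < i) : M i j = 0 :=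
    genHermiteEntry_eq_zero (by omega)
  have hdeg (i j : Fin m) : (M i j).natDegree ≤ n + j - i :=
    (genHermiteEntry_natDegree_le _).trans (by omega)
  have hsum : ∑ j : Fin m, (n + (j : ℕ)) - ∑ i : Fin m, (i : ℕ) = m * n := by
    simp [Finset.sum_add_distrib]
  have hcoeff : (genHermite m n).coeff (m * n)
      = ∏ i ∈ Finset.range m, (i ! : ℝ) / (n + i)! := by
    rw [genHermite, ← hsum, Matrix.coeff_det_sum_tsub M (fun i => i) (fun j => n + j) hzero hdeg,
      ← Matrix.det_descFactorial_div_factorial]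
    congr 1
    ext i j
    simp only [M, Matrix.of_apply]
    rw [← genHermiteEntry_coeff_sub]
    congr 2
    push_cast
    ring
  refine ⟨natDegree_eq_of_le_of_coeff_ne_zero ?_ ?_, hcoeff⟩
  · exact hsum ▸ Matrix.natDegree_det_le_sum_tsub M _ _ hzero hdeg
  · rw [hcoeff]
    exact Finset.prod_ne_zero_iff.2 fun i _ => by positivity
end

section
/- For the Hermite weight w₀(x) = e^{−x²} on ℝ, the Hankel determinant of moments satisfies det( ∫_ℝ x^{i+j} e^{−x²} dx )_{i,j=0}^{n-1} = π^{n/2} ∏_{i=0}^{n-1} i! / 2^i. -/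
/-!
Let `dyckWeight a n k` be the weighted number of `±1` lattice paths of length `n` from height `0`
to height `k` that stay nonnegative, a down-step from height `j` having weight `a j`. For
`a j = j / 2` these are the coefficients expressing `xⁿ` in the monic Hermite polynomials, and the
Gaussian moments are `√π · dyckWeight a m 0` (both sides satisfy `μ (m + 2) = (m + 1) / 2 · μ m`).
Cutting a path of length `i + j` at time `i` gives
`dyckWeight a (i + j) 0 = ∑ₖ dyckWeight a i k · (a 1 ⋯ a k) · dyckWeight a j k`, so the Hankel
matrix is `L D Lᵀ` with `L` unitriangular and `D = diag (a 1 ⋯ a k)`; its determinant is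
`∏ₖ a 1 ⋯ a k`, which for the Hermite weights is `∏ₖ k! / 2ᵏ`.
-/

open MeasureTheory Finset Real
open scoped Matrix

def Matrix.hankel {R : Type*} (μ : ℕ → R) (n : ℕ) : Matrix (Fin n) (Fin n) R :=
  Matrix.of fun i j => μ ((i : ℕ) + j)

section Dyck

variable {R : Type*} [CommRing R] (a : ℕ → R)

def dyckWeight : ℕ → ℕ → R
  | 0, 0 => 1
  | 0, _ + 1 => 0
  | n + 1, 0 => a 1 * dyckWeight n 1
  | n + 1, k + 1 => dyckWeight n k + a (k + 2) * dyckWeight n (k + 2)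

def dyckNorm (k : ℕ) : R := ∏ j ∈ range k, a (j + 1)

theorem dyckWeight_succ_succ (n k : ℕ) :
    dyckWeight a (n + 1) (k + 1) = dyckWeight a n k + a (k + 2) * dyckWeight a n (k + 2) := rfl

theorem dyckWeight_eq_zero_of_lt {n k : ℕ} (h : n < k) : dyckWeight a n k = 0 := by
  induction n generalizing k with
  | zero => obtain ⟨k, rfl⟩ := Nat.exists_eq_add_of_lt h; rfl
  | succ n ih =>
    obtain ⟨k, rfl⟩ := Nat.exists_eq_succ_of_ne_zero (by omega : k ≠ 0)
    rw [dyckWeight_succ_succ, ih (by omega), ih (by omega), mul_zero, add_zero]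

theorem dyckWeight_self (n : ℕ) : dyckWeight a n n = 1 := by
  induction n with
  | zero => rfl
  | succ n ih =>
    rw [dyckWeight_succ_succ, ih, dyckWeight_eq_zero_of_lt a (by omega), mul_zero, add_zero]

theorem dyckNorm_succ (k : ℕ) : dyckNorm a (k + 1) = dyckNorm a k * a (k + 1) :=
  prod_range_succ _ _

theorem sum_dyckWeight_succ_mul {i j N : ℕ} (hj : j < N) :
    ∑ k ∈ range N, dyckWeight a (i + 1) k * dyckNorm a k * dyckWeight a j k
      = ∑ k ∈ range N, (dyckWeight a i k * dyckWeight a j (k + 1)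
          + dyckWeight a i (k + 1) * dyckWeight a j k) * dyckNorm a (k + 1) := by
  obtain ⟨M, rfl⟩ : ∃ M, N = M + 1 := ⟨N - 1, by omega⟩
  have hlast : dyckWeight a i M * dyckWeight a j (M + 1) * dyckNorm a (M + 1) = 0 := by
    rw [dyckWeight_eq_zero_of_lt a (by omega : j < M + 1), mul_zero, zero_mul]
  simp only [add_mul, sum_add_distrib]
  rw [sum_range_succ (fun k => dyckWeight a i k * dyckWeight a j (k + 1) * dyckNorm a (k + 1)),
    hlast, add_zero,
    sum_range_succ' (fun k => dyckWeight a (i + 1) k * dyckNorm a k * dyckWeight a j k),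
    sum_range_succ' (fun k => dyckWeight a i (k + 1) * dyckWeight a j k * dyckNorm a (k + 1)),
    ← add_assoc, ← sum_add_distrib]
  congr 1
  · refine sum_congr rfl fun k _ => ?_
    rw [dyckWeight_succ_succ, dyckNorm_succ a (k + 1)]
    ring
  · rw [dyckNorm_succ]
    simp only [dyckWeight, dyckNorm, range_zero, prod_empty]
    ring

theorem sum_dyckWeight_mul_of_add_lt {i j N : ℕ} (h : i + j < N) :
    ∑ k ∈ range N, dyckWeight a i k * dyckNorm a k * dyckWeight a j k
      = dyckWeight a (i + j) 0 := by
  induction i generalizing j with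
  | zero =>
    rw [sum_eq_single_of_mem 0 (mem_range.2 (by omega))]
    · simp [dyckWeight, dyckNorm]
    · rintro (_ | k) _ hk
      · exact absurd rfl hk
      · simp [dyckWeight]
  | succ i ih =>
    -- the right-hand side of `sum_dyckWeight_succ_mul` is symmetric in `i` and `j`
    have hshift : ∑ k ∈ range N, dyckWeight a (i + 1) k * dyckNorm a k * dyckWeight a j k
        = ∑ k ∈ range N, dyckWeight a i k * dyckNorm a k * dyckWeight a (j + 1) k := by
      calc _ = ∑ k ∈ range N, (dyckWeight a i k * dyckWeight a j (k + 1)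
              + dyckWeight a i (k + 1) * dyckWeight a j k) * dyckNorm a (k + 1) :=
            sum_dyckWeight_succ_mul a (by omega)
        _ = ∑ k ∈ range N, dyckWeight a (j + 1) k * dyckNorm a k * dyckWeight a i k := by
            rw [sum_dyckWeight_succ_mul a (by omega)]
            exact sum_congr rfl fun k _ => by ring
        _ = _ := sum_congr rfl fun k _ => by ring
    rw [hshift, ih (by omega), Nat.add_right_comm, add_assoc]

theorem sum_dyckWeight_mul {i j N : ℕ} (hi : i < N) :
    ∑ k ∈ range N, dyckWeight a i k * dyckNorm a k * dyckWeight a j k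
      = dyckWeight a (i + j) 0 := by
  rw [← sum_dyckWeight_mul_of_add_lt a (N := N + (i + j + 1)) (by omega), sum_range_add,
    sum_eq_zero (s := range (i + j + 1)) fun k _ => ?_, add_zero]
  rw [dyckWeight_eq_zero_of_lt a (by omega : i < N + k), zero_mul, zero_mul]

def dyckMatrix (n : ℕ) : Matrix (Fin n) (Fin n) R := Matrix.of fun i k => dyckWeight a i k

theorem det_dyckMatrix (n : ℕ) : (dyckMatrix a n).det = 1 := by
  rw [Matrix.det_of_isLowerTriangular (dyckMatrix a n) fun i k h => dyckWeight_eq_zero_of_lt a h]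
  simp only [dyckMatrix, Matrix.of_apply, dyckWeight_self, prod_const_one]

theorem hankel_dyckWeight_eq_mul_diagonal_mul_transpose (n : ℕ) :
    Matrix.hankel (dyckWeight a · 0) n
      = dyckMatrix a n * Matrix.diagonal (fun k : Fin n => dyckNorm a k) * (dyckMatrix a n)ᵀ := by
  ext i j
  rw [Matrix.mul_apply, Matrix.hankel, Matrix.of_apply, ← sum_dyckWeight_mul a i.isLt,
    ← Fin.sum_univ_eq_sum_range (fun k => dyckWeight a i k * dyckNorm a k * dyckWeight a j k)]
  simp [dyckMatrix]

theorem det_hankel_dyckWeight (n : ℕ) :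
    (Matrix.hankel (dyckWeight a · 0) n).det = ∏ k ∈ range n, dyckNorm a k := by
  rw [hankel_dyckWeight_eq_mul_diagonal_mul_transpose, Matrix.det_mul, Matrix.det_mul,
    Matrix.det_transpose, det_dyckMatrix, Matrix.det_diagonal,
    Fin.prod_univ_eq_prod_range (dyckNorm a), one_mul, mul_one]

end Dyck

theorem integrable_pow_mul_exp_neg_sq (k : ℕ) :
    Integrable fun x : ℝ => x ^ k * exp (-x ^ 2) := by
  have hg : Integrable fun x : ℝ => x ^ (k : ℝ) * exp (-1 * x ^ 2) :=
    integrable_rpow_mul_exp_neg_mul_sq one_pos (neg_one_lt_zero.trans_le k.cast_nonneg)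
  refine (hg.norm.add hg.norm.comp_neg).mono'
    ((continuous_pow k).mul (continuous_exp.comp (continuous_pow 2).neg)).aestronglyMeasurable
    (Filter.Eventually.of_forall fun x => ?_)
  have hnorm : ‖x ^ k * exp (-x ^ 2)‖ = |x| ^ (k : ℝ) * exp (-1 * x ^ 2) := by
    rw [norm_mul, norm_pow, Real.norm_eq_abs, Real.norm_of_nonneg (exp_pos _).le, rpow_natCast,
      neg_one_mul]
  rcases le_total 0 x with hx | hx
  · calc ‖x ^ k * exp (-x ^ 2)‖ = ‖x ^ (k : ℝ) * exp (-1 * x ^ 2)‖ := by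
          rw [hnorm, Real.norm_eq_abs, abs_mul, abs_rpow_of_nonneg hx, abs_of_pos (exp_pos _)]
      _ ≤ _ := le_add_of_nonneg_right (norm_nonneg _)
  · calc ‖x ^ k * exp (-x ^ 2)‖ = ‖(-x) ^ (k : ℝ) * exp (-1 * (-x) ^ 2)‖ := by
          rw [hnorm, Real.norm_eq_abs, abs_mul, abs_rpow_of_nonneg (neg_nonneg.2 hx), abs_neg,
            neg_sq, abs_of_pos (exp_pos _)]
      _ ≤ _ := le_add_of_nonneg_left (norm_nonneg _)

theorem hasDerivAt_exp_neg_sq (x : ℝ) :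
    HasDerivAt (fun x : ℝ => exp (-x ^ 2)) (-2 * x * exp (-x ^ 2)) x := by
  convert (hasDerivAt_pow 2 x).fun_neg.exp using 1
  push_cast
  ring

theorem hasDerivAt_pow_succ_mul_exp_neg_sq (m : ℕ) (x : ℝ) :
    HasDerivAt (fun x : ℝ => x ^ (m + 1) * exp (-x ^ 2))
      ((m + 1) * (x ^ m * exp (-x ^ 2)) - 2 * (x ^ (m + 2) * exp (-x ^ 2))) x := by
  refine ((hasDerivAt_pow (m + 1) x).mul (hasDerivAt_exp_neg_sq x)).congr_deriv ?_
  push_cast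
  ring

theorem integral_pow_add_two_mul_exp_neg_sq (m : ℕ) :
    ∫ x : ℝ, x ^ (m + 2) * exp (-x ^ 2) = (m + 1) / 2 * ∫ x : ℝ, x ^ m * exp (-x ^ 2) := by
  have hm := (integrable_pow_mul_exp_neg_sq m).const_mul ((m : ℝ) + 1)
  have hm2 := (integrable_pow_mul_exp_neg_sq (m + 2)).const_mul 2
  have h := integral_eq_zero_of_hasDerivAt_of_integrable (hasDerivAt_pow_succ_mul_exp_neg_sq m)
    (hm.sub hm2) (integrable_pow_mul_exp_neg_sq (m + 1))
  rw [integral_sub hm hm2, integral_const_mul, integral_const_mul] at h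
  linarith

theorem integral_pow_one_mul_exp_neg_sq : ∫ x : ℝ, x ^ 1 * exp (-x ^ 2) = 0 :=
  integral_eq_zero_of_hasDerivAt_of_integrable
    (fun x => ((hasDerivAt_exp_neg_sq x).div_const (-2)).congr_deriv (by ring))
    (integrable_pow_mul_exp_neg_sq 1)
    (by simpa using (integrable_pow_mul_exp_neg_sq 0).div_const (-2))

section Hermite

variable {K : Type*} [Field K]

theorem dyckNorm_half (k : ℕ) : dyckNorm (fun j : ℕ => (j : K) / 2) k = k.factorial / 2 ^ k := by
  simp [dyckNorm, prod_div_distrib, ← prod_range_add_one_eq_factorial]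

variable [CharZero K]

theorem mul_dyckWeight_half_add_two (n k : ℕ) :
    ((k : K) + 1) * (k + 2) * dyckWeight (fun j : ℕ => (j : K) / 2) n (k + 2)
      = 2 * (n - k) * dyckWeight (fun j : ℕ => (j : K) / 2) n k := by
  induction n generalizing k with
  | zero =>
    rw [dyckWeight_eq_zero_of_lt _ (by omega : 0 < k + 2)]
    rcases k with _ | k
    · simp [dyckWeight]
    · rw [dyckWeight_eq_zero_of_lt _ (by omega : 0 < k + 1)]
      ring
  | succ n ih =>
    rcases k with _ | k
    · have h1 := ih 1
      simp only [dyckWeight] at h1 ⊢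
      push_cast at h1 ⊢
      linear_combination (norm := (field_simp; ring)) h1 / 2
    · have h1 := ih k
      have h2 := ih (k + 2)
      simp only [dyckWeight_succ_succ] at h1 h2 ⊢
      push_cast at h1 h2 ⊢
      linear_combination (norm := (field_simp; ring)) (k + 2) / 2 * h2 + h1

theorem dyckWeight_half_add_two_zero (m : ℕ) :
    dyckWeight (fun j : ℕ => (j : K) / 2) (m + 2) 0
      = (m + 1) / 2 * dyckWeight (fun j : ℕ => (j : K) / 2) m 0 := by
  have h := mul_dyckWeight_half_add_two (K := K) m 0
  simp only [dyckWeight] at h ⊢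
  push_cast at h ⊢
  linear_combination (norm := (field_simp; ring)) h / 4

end Hermite

theorem integral_pow_mul_exp_neg_sq :
    ∀ m : ℕ, ∫ x : ℝ, x ^ m * exp (-x ^ 2) = √π * dyckWeight (fun j : ℕ => (j : ℝ) / 2) m 0
  | 0 => by simpa [dyckWeight] using integral_gaussian 1
  | 1 => by rw [integral_pow_one_mul_exp_neg_sq]; simp [dyckWeight]
  | m + 2 => by
    rw [integral_pow_add_two_mul_exp_neg_sq, integral_pow_mul_exp_neg_sq m,
      dyckWeight_half_add_two_zero]
    ring

/-- The Hankel determinant of the moments of the Hermite weight e^{−x²} equals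
π^{n/2} ∏_{i=0}^{n-1} i!/2^i. -/
theorem hankel_det_hermite_weight (n : ℕ) :
    Matrix.det (Matrix.of fun i j : Fin n =>
        ∫ x : ℝ, x ^ ((i : ℕ) + (j : ℕ)) * Real.exp (-x ^ 2))
      = Real.pi ^ ((n : ℝ) / 2) * ∏ i ∈ Finset.range n, (Nat.factorial i : ℝ) / 2 ^ i := by
  have hmoments : (Matrix.of fun i j : Fin n => ∫ x : ℝ, x ^ ((i : ℕ) + (j : ℕ)) * exp (-x ^ 2))
      = √π • Matrix.hankel (dyckWeight (fun j : ℕ => (j : ℝ) / 2) · 0) n := by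
    ext i j
    simp [Matrix.hankel, integral_pow_mul_exp_neg_sq]
  rw [hmoments, Matrix.det_smul, det_hankel_dyckWeight, Fintype.card_fin, sqrt_eq_rpow,
    ← rpow_natCast, ← rpow_mul pi_pos.le]
  simp only [dyckNorm_half, one_div_mul_eq_div]
end
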